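/- Given a pushout square of chain complexes of abelian groups with horizontal maps degreewise injective and composed horizontally with another such pushout square whose map to the pushout is a quasi-isomorphism, the horizontal composite square again has the property that the canonical map from the pushout is a quasi-isomorphism. Precisely: if squares (A→B→E over C→D→F) commute, the maps C∪_A B → D and D∪_B E → F are quasi-isomorphisms, and A→B, B→E, C→D, D→F are degreewise injective, then C∪_A E → F is a quasi-isomorphism. -/

import Mathlib

/-!
A pushout square along a monomorphism `t : X₁ ⟶ X₂` of complexes gives a short exact sequence
`X₁ ⟶ X₂ ⊞ X₃ ⟶ X₄`. A map of such squares that is the identity on `X₁` and `X₂` and a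
quasi-isomorphism on `X₃` is then a quasi-isomorphism on `X₄`, by the five lemma in the long
exact homology sequences (the gluing lemma).

Since `C ∪_A E = (C ∪_A B) ∪_B E`, the canonical map `C ∪_A E ⟶ F` factors as
`(C ∪_A B) ∪_B E ⟶ D ∪_B E ⟶ F`: the first map is glued along `j` from the
quasi-isomorphism `C ∪_A B ⟶ D`, the second is a quasi-isomorphism by hypothesis.
-/

open CategoryTheory Limits

lemma CategoryTheory.Functor.isIso_map_biprod_map {C D : Type*} [Category C] [Category D]
    [HasZeroMorphisms C] [HasZeroMorphisms D] [HasBinaryBiproducts C] [HasBinaryBiproducts D]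
    (F : C ⥤ D) [F.PreservesZeroMorphisms] [PreservesBinaryBiproducts F]
    {W X Y Z : C} (f : W ⟶ Y) (g : X ⟶ Z) [IsIso (F.map f)] [IsIso (F.map g)] :
    IsIso (F.map (biprod.map f g)) := by
  have : F.map (biprod.map f g) = (F.mapBiprod W X ≪≫
      biprod.mapIso (asIso (F.map f)) (asIso (F.map g)) ≪≫ (F.mapBiprod Y Z).symm).hom := by
    simp only [Iso.trans_hom, Iso.symm_hom, ← Category.assoc, Iso.eq_comp_inv]
    ext <;> simp only [Functor.mapBiprod_hom, biprod.mapIso_hom, asIso_hom, Category.assoc,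
      biprod.lift_fst, biprod.lift_snd, biprod.map_fst, biprod.map_snd, biprod.lift_fst_assoc,
      biprod.lift_snd_assoc, ← F.map_comp]
  rw [this]
  infer_instance

lemma CategoryTheory.IsPushout.shortExact_shortComplex {C : Type*} [Category C] [Abelian C]
    {X₁ X₂ X₃ X₄ : C} {t : X₁ ⟶ X₂} {l : X₁ ⟶ X₃} {r : X₂ ⟶ X₄} {b : X₃ ⟶ X₄}
    (h : IsPushout t l r b) [Mono t] : h.shortComplex.ShortExact := by
  have : Mono (biprod.lift t (-l)) := mono_of_mono_fac (biprod.lift_fst t (-l))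
  exact { exact := h.exact_shortComplex, mono_f := this, epi_g := h.epi_shortComplex_g }

lemma CategoryTheory.Limits.isPushout_pushout_inr_comp {C : Type*} [Category C]
    {X Y Z W : C} (f : X ⟶ Z) (g : X ⟶ Y) (h : Y ⟶ W) [HasPushout f g]
    [HasPushout f (g ≫ h)] :
    IsPushout h (pushout.inr f g) (pushout.inr f (g ≫ h))
      (pushout.desc (pushout.inl f (g ≫ h)) (h ≫ pushout.inr f (g ≫ h))
        (by rw [pushout.condition, Category.assoc])) := by
  refine (IsPushout.of_top ?_ ?_ (IsPushout.of_hasPushout f g)).flip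
  · rw [pushout.inl_desc]
    exact IsPushout.of_hasPushout f (g ≫ h)
  · rw [pushout.inr_desc]

namespace HomologicalComplex

variable {C ι : Type*} [Category C] [Abelian C] {c : ComplexShape ι}

instance quasiIso_biprod_map {W X Y Z : HomologicalComplex C c} (f : W ⟶ Y) (g : X ⟶ Z)
    [QuasiIso f] [QuasiIso g] : QuasiIso (biprod.map f g) := by
  refine (quasiIso_iff _).2 fun i ↦ ?_
  have := preservesBinaryBiproducts_of_preservesBiproducts (homologyFunctor C c i)
  have : IsIso ((homologyFunctor C c i).map f) :=
    (quasiIsoAt_iff_isIso_homologyMap f i).1 inferInstance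
  have : IsIso ((homologyFunctor C c i).map g) :=
    (quasiIsoAt_iff_isIso_homologyMap g i).1 inferInstance
  exact (quasiIsoAt_iff_isIso_homologyMap _ i).2
    ((homologyFunctor C c i).isIso_map_biprod_map f g)

lemma quasiIso_of_isPushout {X₁ X₂ X₃ X₄ Y₃ Y₄ : HomologicalComplex C c}
    {t : X₁ ⟶ X₂} {l : X₁ ⟶ X₃} {r : X₂ ⟶ X₄} {b : X₃ ⟶ X₄} {l' : X₁ ⟶ Y₃} {r' : X₂ ⟶ Y₄}
    {b' : Y₃ ⟶ Y₄} (h : IsPushout t l r b) (h' : IsPushout t l' r' b') [Mono t]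
    (q : X₃ ⟶ Y₃) [QuasiIso q] (hl : l ≫ q = l') (φ : X₄ ⟶ Y₄) (hr : r ≫ φ = r')
    (hb : b ≫ φ = q ≫ b') : QuasiIso φ := by
  -- `h.shortComplex` itself is avoided: its objects are not reducibly `X₁`, `X₂ ⊞ X₃`, `X₄`,
  -- which blocks `simp` in the commutativity proofs.
  let ψ : ShortComplex.mk (biprod.lift t (-l)) (biprod.desc r b) (by simp [h.w]) ⟶
      ShortComplex.mk (biprod.lift t (-l')) (biprod.desc r' b') (by simp [h'.w]) :=
    { τ₁ := 𝟙 X₁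
      τ₂ := biprod.map (𝟙 X₂) q
      τ₃ := φ
      comm₁₂ := by apply biprod.hom_ext <;> simp [hl]
      comm₂₃ := by apply biprod.hom_ext' <;> simp [hr, hb] }
  exact HomologySequence.quasiIso_τ₃ ψ h.shortExact_shortComplex h'.shortExact_shortComplex
    (inferInstanceAs (QuasiIso (𝟙 X₁))) (inferInstanceAs (QuasiIso (biprod.map (𝟙 X₂) q)))

end HomologicalComplex

theorem composed_square_quasiIso_general
    (A B C D E F : ChainComplex AddCommGrpCat ℤ)
    (i : A ⟶ B) (j : B ⟶ E) (a : A ⟶ C) (b : B ⟶ D) (e : E ⟶ F)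
    (c : C ⟶ D) (d : D ⟶ F)
    (hj : ∀ n, Function.Injective (j.f n))
    (w1 : a ≫ c = i ≫ b) (w2 : b ≫ d = j ≫ e)
    (w3 : a ≫ (c ≫ d) = (i ≫ j) ≫ e)
    (h1 : QuasiIso (pushout.desc c b w1))
    (h2 : QuasiIso (pushout.desc d e w2)) :
    QuasiIso (pushout.desc (c ≫ d) e w3) := by
  have : Mono j := HomologicalComplex.mono_of_mono_f j
    fun n ↦ (AddCommGrpCat.mono_iff_injective _).2 (hj n)
  let φ : pushout a (i ≫ j) ⟶ pushout b j :=
    pushout.desc (c ≫ pushout.inl b j) (pushout.inr b j)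
      (by rw [← Category.assoc, w1, Category.assoc, pushout.condition, Category.assoc])
  have : QuasiIso φ :=
    HomologicalComplex.quasiIso_of_isPushout (isPushout_pushout_inr_comp a i j)
      (IsPushout.of_hasPushout b j).flip (pushout.desc c b w1) (pushout.inr_desc _ _ _)
      φ (pushout.inr_desc _ _ _) (by
        apply pushout.hom_ext
        · rw [pushout.inl_desc_assoc, pushout.inl_desc, pushout.inl_desc_assoc]
        · rw [pushout.inr_desc_assoc, Category.assoc, pushout.inr_desc, pushout.inr_desc_assoc,
            pushout.condition])
  have hfac : pushout.desc (c ≫ d) e w3 = φ ≫ pushout.desc d e w2 := by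
    apply pushout.hom_ext
    · rw [pushout.inl_desc, pushout.inl_desc_assoc, Category.assoc, pushout.inl_desc]
    · rw [pushout.inr_desc, pushout.inr_desc_assoc, pushout.inr_desc]
  rw [hfac]
  infer_instance

/-- Horizontal composition of pushout squares of chain complexes: if the canonical maps
`C ∪_A B → D` and `D ∪_B E → F` are quasi-isomorphisms (the horizontal maps being
degreewise injective), then the canonical map `C ∪_A E → F` from the pushout of the
horizontally composed square is a quasi-isomorphism. -/
theorem composed_square_quasiIso
    (A B C D E F : ChainComplex AddCommGrpCat ℤ)
    (i : A ⟶ B) (j : B ⟶ E) (a : A ⟶ C) (b : B ⟶ D) (e : E ⟶ F)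
    (c : C ⟶ D) (d : D ⟶ F)
    (hi : ∀ n, Function.Injective (i.f n))
    (hj : ∀ n, Function.Injective (j.f n))
    (hc : ∀ n, Function.Injective (c.f n))
    (hd : ∀ n, Function.Injective (d.f n))
    (w1 : a ≫ c = i ≫ b) (w2 : b ≫ d = j ≫ e)
    (w3 : a ≫ (c ≫ d) = (i ≫ j) ≫ e)
    (h1 : QuasiIso (pushout.desc c b w1))
    (h2 : QuasiIso (pushout.desc d e w2)) :
    QuasiIso (pushout.desc (c ≫ d) e w3) :=
  composed_square_quasiIso_general A B C D E F i j a b e c d hj w1 w2 w3 h1 h2
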